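/- arXiv:2601.17464 — 2 statements merged into one kernel-verified Lean document; each statement's English description precedes it below -/
import Mathlib

section
/- Let ρ, ν ∈ ℕ, let S : ℝ → ℝ^{ρ×ρ} and F : ℝ → ℝ^{ν×ν} be continuous with transition matrices Φ_S and Φ_F respectively, let H : ℝ → ℝ^{1×ν} and R : ℝ → ℝ^{1×ρ} be continuous, and fix t₀ ∈ ℝ. Then there exists a differentiable map Σ : ℝ → ℝ^{ν×ρ} satisfying Σ'(t) + Σ(t)·S(t) = F(t)·Σ(t) and R(t) = H(t)·Σ(t) for all t ∈ ℝ if and only if there exists a constant matrix Σ₀ ∈ ℝ^{ν×ρ} such that R(t)·Φ_S(t,t₀) = H(t)·Φ_F(t,t₀)·Σ₀ for all t ∈ ℝ. Moreover, in that case the unique such Σ with Σ(t₀) = Σ₀ is Σ(t) = Φ_F(t,t₀)·Σ₀·Φ_S(t₀,t), and if additionally ‖Φ_F(t,s)‖ ≤ φ_F and ‖Φ_S(t,s)‖ ≤ φ_S for all t, s ∈ ℝ, then Σ is uniformly bounded. -/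
open Matrix MeasureTheory Filter

attribute [local instance] Matrix.frobeniusNormedAddCommGroup Matrix.frobeniusNormedSpace

/-- A transition matrix of a continuous matrix-valued map `A`. -/
structure IsTransitionMatrix {ι : Type*} [Fintype ι] [DecidableEq ι]
    (A : ℝ → Matrix ι ι ℝ) (Φ : ℝ → ℝ → Matrix ι ι ℝ) : Prop where
  refl : ∀ s, Φ s s = 1
  comp : ∀ t s r, Φ t s * Φ s r = Φ t r
  hasDerivAt_fst : ∀ s t, HasDerivAt (fun u => Φ u s) (A t * Φ t s) t
  hasDerivAt_snd : ∀ t s, HasDerivAt (fun u => Φ t u) (-(Φ t s * A s)) s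

section Aux

variable {m n p : Type*} [Fintype m] [Fintype n] [Fintype p]

/-- Heterogeneous matrix multiplication as a continuous bilinear map (Frobenius norm). -/
noncomputable def matMulCLM (m n p : Type*) [Fintype m] [Fintype n] [Fintype p] :
    Matrix m n ℝ →L[ℝ] Matrix n p ℝ →L[ℝ] Matrix m p ℝ :=
  LinearMap.mkContinuous₂
    (LinearMap.mk₂ ℝ (· * ·) Matrix.add_mul (fun c A B => Matrix.smul_mul c A B)
      Matrix.mul_add (fun c A B => Matrix.mul_smul A c B))
    1 (fun A B => by simpa using Matrix.frobenius_norm_mul A B)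

@[simp] lemma matMulCLM_apply (A : Matrix m n ℝ) (B : Matrix n p ℝ) :
    matMulCLM m n p A B = A * B := rfl

lemma HasDerivAt.matMul {f : ℝ → Matrix m n ℝ} {g : ℝ → Matrix n p ℝ}
    {f' : Matrix m n ℝ} {g' : Matrix n p ℝ} {t : ℝ}
    (hf : HasDerivAt f f' t) (hg : HasDerivAt g g' t) :
    HasDerivAt (fun u => f u * g u) (f' * g t + f t * g') t := by
  have ef : ∀ i j, HasDerivAt (fun u => f u i j) (f' i j) t := fun i j =>
    hasDerivAt_pi.1 (hasDerivAt_pi.1 hf i) j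
  have eg : ∀ i j, HasDerivAt (fun u => g u i j) (g' i j) t := fun i j =>
    hasDerivAt_pi.1 (hasDerivAt_pi.1 hg i) j
  refine hasDerivAt_pi.2 fun i => hasDerivAt_pi.2 fun k => ?_
  simp only [Matrix.mul_apply, Matrix.add_apply]
  have := HasDerivAt.fun_sum (u := Finset.univ) fun j _ => (ef i j).mul (eg j k)
  convert this using 1
  · rfl
  exact (Finset.sum_add_distrib (s := Finset.univ) (f := fun j => f' i j * g t j k)
    (g := fun j => f t i j * g' j k)).symm

end Aux

section Main

variable {ρ ν : ℕ}

/-- Any solution of `Σ' + Σ S = F Σ` propagates via the transition matrices. -/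
lemma sol_repr (S : ℝ → Matrix (Fin ρ) (Fin ρ) ℝ) (F : ℝ → Matrix (Fin ν) (Fin ν) ℝ)
    (ΦS : ℝ → ℝ → Matrix (Fin ρ) (Fin ρ) ℝ) (ΦF : ℝ → ℝ → Matrix (Fin ν) (Fin ν) ℝ)
    (hΦS : IsTransitionMatrix S ΦS) (hΦF : IsTransitionMatrix F ΦF) (t₀ : ℝ)
    (Sg : ℝ → Matrix (Fin ν) (Fin ρ) ℝ) (hSg : Differentiable ℝ Sg)
    (hode : ∀ t, deriv Sg t + Sg t * S t = F t * Sg t) :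
    ∀ t, Sg t = ΦF t t₀ * Sg t₀ * ΦS t₀ t := by
  set G : ℝ → Matrix (Fin ν) (Fin ρ) ℝ := fun t => ΦF t₀ t * Sg t * ΦS t t₀ with hG
  have hder : ∀ t, HasDerivAt G 0 t := by
    intro t
    have h1 : HasDerivAt (fun u => ΦF t₀ u) (-(ΦF t₀ t * F t)) t := hΦF.hasDerivAt_snd t₀ t
    have h2 : HasDerivAt Sg (F t * Sg t - Sg t * S t) t := by
      rw [← eq_sub_of_add_eq (hode t)]
      exact hasDerivAt_deriv_iff.2 (hSg t)
    have h3 : HasDerivAt (fun u => ΦS u t₀) (S t * ΦS t t₀) t := hΦS.hasDerivAt_fst t₀ t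
    have h := (h1.matMul h2).matMul h3
    have hzero : (-(ΦF t₀ t * F t) * Sg t + ΦF t₀ t * (F t * Sg t - Sg t * S t)) * ΦS t t₀
        + ΦF t₀ t * Sg t * (S t * ΦS t t₀) = 0 := by
      simp only [Matrix.mul_sub, Matrix.sub_mul, Matrix.add_mul, Matrix.neg_mul,
        Matrix.mul_assoc]
      abel
    rw [hzero] at h
    exact h
  have hconst : ∀ t, G t = G t₀ := by
    intro t
    exact is_const_of_deriv_eq_zero (fun x => (hder x).differentiableAt)
      (fun x => (hder x).deriv) t t₀
  intro t
  have hGt : G t = Sg t₀ := by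
    rw [hconst t, hG]
    simp [hΦF.refl, hΦS.refl]
  calc Sg t = ΦF t t₀ * G t * ΦS t₀ t := by
        rw [hG]
        simp only [Matrix.mul_assoc]
        rw [hΦS.comp t t₀ t, hΦS.refl t, Matrix.mul_one, ← Matrix.mul_assoc,
          hΦF.comp t t₀ t, hΦF.refl t, Matrix.one_mul]
    _ = ΦF t t₀ * Sg t₀ * ΦS t₀ t := by rw [hGt]

end Main

/-- the regulator-type equation `Σ' + Σ·S = F·Σ`, `R = H·Σ` admits a solution
iff the propagation condition `R(t)·Φ_S(t,t₀) = H(t)·Φ_F(t,t₀)·Sig₀` holds for some constant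
matrix `Sig₀`; moreover in that case the solution with initial value `Sig₀` is
`Φ_F(t,t₀)·Sig₀·Φ_S(t₀,t)`, and it is uniformly bounded whenever `Φ_F` and `Φ_S` are. -/
theorem propagation_condition_iff_solvable {ρ ν : ℕ}
    (S : ℝ → Matrix (Fin ρ) (Fin ρ) ℝ) (F : ℝ → Matrix (Fin ν) (Fin ν) ℝ)
    (hS : Continuous S) (hF : Continuous F)
    (ΦS : ℝ → ℝ → Matrix (Fin ρ) (Fin ρ) ℝ) (ΦF : ℝ → ℝ → Matrix (Fin ν) (Fin ν) ℝ)
    (hΦS : IsTransitionMatrix S ΦS) (hΦF : IsTransitionMatrix F ΦF)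
    (H : ℝ → Matrix (Fin 1) (Fin ν) ℝ) (R : ℝ → Matrix (Fin 1) (Fin ρ) ℝ)
    (hH : Continuous H) (hR : Continuous R)
    (t₀ : ℝ) :
    ((∃ Sg : ℝ → Matrix (Fin ν) (Fin ρ) ℝ, Differentiable ℝ Sg ∧
        (∀ t, deriv Sg t + Sg t * S t = F t * Sg t) ∧ (∀ t, R t = H t * Sg t)) ↔
      (∃ Sig₀ : Matrix (Fin ν) (Fin ρ) ℝ, ∀ t, R t * ΦS t t₀ = H t * ΦF t t₀ * Sig₀))
    ∧
    (∀ Sig₀ : Matrix (Fin ν) (Fin ρ) ℝ, ∀ Sg : ℝ → Matrix (Fin ν) (Fin ρ) ℝ,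
      Differentiable ℝ Sg →
      (∀ t, deriv Sg t + Sg t * S t = F t * Sg t) → (∀ t, R t = H t * Sg t) →
      Sg t₀ = Sig₀ → ∀ t, Sg t = ΦF t t₀ * Sig₀ * ΦS t₀ t)
    ∧
    (∀ φF φS : ℝ, (∀ t s, ‖ΦF t s‖ ≤ φF) → (∀ t s, ‖ΦS t s‖ ≤ φS) →
      ∀ Sg : ℝ → Matrix (Fin ν) (Fin ρ) ℝ, Differentiable ℝ Sg →
      (∀ t, deriv Sg t + Sg t * S t = F t * Sg t) → (∀ t, R t = H t * Sg t) →
      ∃ C : ℝ, ∀ t, ‖Sg t‖ ≤ C) := by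
  refine ⟨⟨?_, ?_⟩, ?_, ?_⟩
  · rintro ⟨Sg, hSg, hode, hout⟩
    refine ⟨Sg t₀, fun t => ?_⟩
    have hrepr := sol_repr S F ΦS ΦF hΦS hΦF t₀ Sg hSg hode t
    rw [hout t, hrepr]
    simp only [Matrix.mul_assoc]
    rw [hΦS.comp t₀ t t₀, hΦS.refl, Matrix.mul_one]
  · rintro ⟨Sig₀, hprop⟩
    refine ⟨fun t => ΦF t t₀ * Sig₀ * ΦS t₀ t, ?_, ?_, ?_⟩
    · intro t
      exact (((hΦF.hasDerivAt_fst t₀ t).matMul (hasDerivAt_const t Sig₀)).matMul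
        (hΦS.hasDerivAt_snd t₀ t)).differentiableAt
    · intro t
      have h := ((hΦF.hasDerivAt_fst t₀ t).matMul (hasDerivAt_const t Sig₀)).matMul
        (hΦS.hasDerivAt_snd t₀ t)
      have hd : deriv (fun t => ΦF t t₀ * Sig₀ * ΦS t₀ t) t = _ := h.deriv
      rw [hd]
      simp only [Matrix.mul_zero, add_zero, Matrix.mul_neg, Matrix.mul_assoc]
      abel
    · intro t
      have h := hprop t
      have := congrArg (fun M => M * ΦS t₀ t) h
      simp only [Matrix.mul_assoc] at this ⊢
      rwa [hΦS.comp t t₀ t, hΦS.refl, Matrix.mul_one] at this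
  · intro Sig₀ Sg hSg hode hout h0 t
    rw [← h0]
    exact sol_repr S F ΦS ΦF hΦS hΦF t₀ Sg hSg hode t
  · intro φF φS hφF hφS Sg hSg hode hout
    have hφF0 : (0:ℝ) ≤ φF := le_trans (norm_nonneg _) (hφF t₀ t₀)
    have hφS0 : (0:ℝ) ≤ φS := le_trans (norm_nonneg _) (hφS t₀ t₀)
    refine ⟨φF * ‖Sg t₀‖ * φS, fun t => ?_⟩
    rw [sol_repr S F ΦS ΦF hΦS hΦF t₀ Sg hSg hode t]
    calc ‖ΦF t t₀ * Sg t₀ * ΦS t₀ t‖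
        ≤ ‖ΦF t t₀ * Sg t₀‖ * ‖ΦS t₀ t‖ := Matrix.frobenius_norm_mul _ _
      _ ≤ (‖ΦF t t₀‖ * ‖Sg t₀‖) * ‖ΦS t₀ t‖ :=
          mul_le_mul_of_nonneg_right (Matrix.frobenius_norm_mul _ _) (norm_nonneg _)
      _ ≤ (φF * ‖Sg t₀‖) * φS := by
          apply mul_le_mul
          · exact mul_le_mul_of_nonneg_right (hφF t t₀) (norm_nonneg _)
          · exact hφS t₀ t
          · exact norm_nonneg _
          · positivity
end

section
/- Let ν ∈ ℕ, let F : ℝ → ℝ^{ν×ν} and H : ℝ → ℝ^{1×ν} be continuous with Φ_F a transition matrix of F, and let α, δ, β₁, β₂ > 0 and t₀ ∈ ℝ. Assume: (i) ‖Φ_F(t,s)·λ‖ ≥ β₁·‖λ‖ for all t, s ∈ ℝ and all λ ∈ ℝ^ν; (ii) uniform complete observability: ∫_{t−δ}^{t} ‖H(τ)·Φ_F(τ,t−δ)·λ‖² dτ ≥ β₂·‖λ‖² for all t ∈ ℝ and all λ ∈ ℝ^ν. Define, for t ≥ t₀, L(t) := ∫_{t₀}^{t} e^{−α(t−τ)}·(Φ_F(τ,t))ᵀ·H(τ)ᵀ·H(τ)·Φ_F(τ,t)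 dτ + β₂·e^{−α(t−t₀)}·(Φ_F(t₀,t))ᵀ·Φ_F(t₀,t). Then for every t ≥ t₀ and every λ ∈ ℝ^ν, λᵀ·L(t)·λ ≥ e^{−αδ}·β₁²·β₂·‖λ‖²; in particular L(t) is a symmetric positive-definite matrix with uniformly bounded inverse. -/
open Matrix MeasureTheory Filter intervalIntegral

attribute [local instance] Matrix.frobeniusNormedAddCommGroup Matrix.frobeniusNormedSpace

/-- Euclidean norm on `Fin ν → ℝ`. -/
noncomputable def euclNorm {ν : ℕ} (v : Fin ν → ℝ) : ℝ :=
  Real.sqrt (∑ i, (v i) ^ 2)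

lemma euclNorm_nonneg {ν : ℕ} (v : Fin ν → ℝ) : 0 ≤ euclNorm v := Real.sqrt_nonneg _

lemma euclNorm_sq {ν : ℕ} (v : Fin ν → ℝ) : euclNorm v ^ 2 = v ⬝ᵥ v := by
  rw [euclNorm, Real.sq_sqrt (Finset.sum_nonneg fun i _ => sq_nonneg _)]
  simp [dotProduct, sq]

lemma euclNorm_pos {ν : ℕ} {v : Fin ν → ℝ} (hv : v ≠ 0) : 0 < euclNorm v := by
  rw [euclNorm]
  apply Real.sqrt_pos.2
  rcases Function.ne_iff.1 hv with ⟨i, hi⟩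
  exact Finset.sum_pos' (fun j _ => sq_nonneg _)
    ⟨i, Finset.mem_univ i, by rw [← sq_abs]; exact pow_pos (abs_pos.2 hi) 2⟩

/-- Cauchy–Schwarz for the euclidean norm. -/
lemma dotProduct_le_euclNorm_mul_euclNorm {ν : ℕ} (x y : Fin ν → ℝ) :
    x ⬝ᵥ y ≤ euclNorm x * euclNorm y := by
  simpa [dotProduct, euclNorm] using Real.sum_mul_le_sqrt_mul_sqrt Finset.univ x y

/-- Quadratic form of `Aᵀ * A`. -/
lemma dotProduct_transpose_mul_mulVec {m ν : ℕ} (A : Matrix (Fin m) (Fin ν) ℝ)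
    (lam : Fin ν → ℝ) :
    lam ⬝ᵥ ((Aᵀ * A) *ᵥ lam) = (A *ᵥ lam) ⬝ᵥ (A *ᵥ lam) := by
  rw [← Matrix.mulVec_mulVec, Matrix.dotProduct_mulVec, Matrix.vecMul_transpose]

/-- The quadratic-form continuous linear functional `M ↦ lam ⬝ᵥ (M *ᵥ lam)`. -/
noncomputable def quadCLM {ν : ℕ} (lam : Fin ν → ℝ) :
    Matrix (Fin ν) (Fin ν) ℝ →L[ℝ] ℝ :=
  LinearMap.toContinuousLinearMap
    { toFun := fun M => lam ⬝ᵥ (M *ᵥ lam)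
      map_add' := by intro A B; simp [Matrix.add_mulVec, dotProduct_add]
      map_smul' := by intro c A; simp [Matrix.smul_mulVec, dotProduct_smul] }

@[simp] lemma quadCLM_apply {ν : ℕ} (lam : Fin ν → ℝ) (M : Matrix (Fin ν) (Fin ν) ℝ) :
    quadCLM lam M = lam ⬝ᵥ (M *ᵥ lam) := rfl

/-- The transpose as a continuous linear map. -/
noncomputable def transposeCLM {ν : ℕ} :
    Matrix (Fin ν) (Fin ν) ℝ →L[ℝ] Matrix (Fin ν) (Fin ν) ℝ :=
  LinearMap.toContinuousLinearMap
    (Matrix.transposeLinearEquiv (Fin ν) (Fin ν) ℝ ℝ).toLinearMap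

@[simp] lemma transposeCLM_apply {ν : ℕ} (M : Matrix (Fin ν) (Fin ν) ℝ) :
    transposeCLM M = Mᵀ := rfl

/-- lower bound on the quadratic form of the Lyapunov-type
matrix `L(t)` built from a marginally stable, uniformly completely observable pair
`(F, H)`; in particular `L(t)` is symmetric positive definite with uniformly
bounded inverse. -/
theorem observability_gramian_lower_bound {ν : ℕ}
    (F : ℝ → Matrix (Fin ν) (Fin ν) ℝ) (H : ℝ → Matrix (Fin 1) (Fin ν) ℝ)
    (hF : Continuous F) (hH : Continuous H)
    (ΦF : ℝ → ℝ → Matrix (Fin ν) (Fin ν) ℝ) (hΦF : IsTransitionMatrix F ΦF)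
    (α δ β₁ β₂ t₀ : ℝ) (hα : 0 < α) (hδ : 0 < δ) (hβ₁ : 0 < β₁) (hβ₂ : 0 < β₂)
    (hlow : ∀ t s : ℝ, ∀ lam : Fin ν → ℝ, β₁ * euclNorm lam ≤ euclNorm (ΦF t s *ᵥ lam))
    (hobs : ∀ t : ℝ, ∀ lam : Fin ν → ℝ,
      β₂ * euclNorm lam ^ 2 ≤
        ∫ τ in (t - δ)..t, (((H τ * ΦF τ (t - δ)) *ᵥ lam) 0) ^ 2)
    (L : ℝ → Matrix (Fin ν) (Fin ν) ℝ)
    (hL : ∀ t, L t =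
      (∫ τ in t₀..t, Real.exp (-α * (t - τ)) • ((ΦF τ t)ᵀ * (H τ)ᵀ * H τ * ΦF τ t))
      + (β₂ * Real.exp (-α * (t - t₀))) • ((ΦF t₀ t)ᵀ * ΦF t₀ t)) :
    (∀ t, t₀ ≤ t → ∀ lam : Fin ν → ℝ,
      Real.exp (-α * δ) * β₁ ^ 2 * β₂ * euclNorm lam ^ 2 ≤ lam ⬝ᵥ (L t *ᵥ lam)) ∧
    (∀ t, t₀ ≤ t → (L t).PosDef) ∧
    (∃ C : ℝ, ∀ t, t₀ ≤ t → ‖(L t)⁻¹‖ ≤ C) := by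
  -- continuity of the transition matrix in its first variable
  have hΦc : ∀ s, Continuous fun u => ΦF u s := fun s =>
    continuous_iff_continuousAt.2 fun u => (hΦF.hasDerivAt_fst s u).continuousAt
  -- continuity of the matrix integrand
  have hcont : ∀ t : ℝ, Continuous fun τ =>
      Real.exp (-α * (t - τ)) • ((ΦF τ t)ᵀ * (H τ)ᵀ * H τ * ΦF τ t) := by
    intro t
    exact ((Real.continuous_exp.comp (by fun_prop)).smul
      ((((hΦc t).matrix_transpose.matrix_mul hH.matrix_transpose).matrix_mul hH).matrix_mul
        (hΦc t)))
  -- the scalar integrand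
  set g : ℝ → ℝ → (Fin ν → ℝ) → ℝ := fun t τ lam =>
    Real.exp (-α * (t - τ)) * (((H τ * ΦF τ t) *ᵥ lam) 0) ^ 2 with hg_def
  have hgcont : ∀ t lam, Continuous fun τ => g t τ lam := by
    intro t lam
    apply (Real.continuous_exp.comp (by fun_prop)).mul
    apply Continuous.pow
    exact (continuous_apply 0).comp ((hH.matrix_mul (hΦc t)).matrix_mulVec continuous_const)
  have hgnonneg : ∀ t τ lam, 0 ≤ g t τ lam := fun t τ lam =>
    mul_nonneg (Real.exp_nonneg _) (sq_nonneg _)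
  -- identity for the quadratic form of `L t`
  have hquad : ∀ t lam, lam ⬝ᵥ (L t *ᵥ lam) =
      (∫ τ in t₀..t, g t τ lam)
        + (β₂ * Real.exp (-α * (t - t₀))) * euclNorm (ΦF t₀ t *ᵥ lam) ^ 2 := by
    intro t lam
    rw [hL t, Matrix.add_mulVec, dotProduct_add]
    congr 1
    · have := ((quadCLM lam).intervalIntegral_comp_comm
        ((hcont t).intervalIntegrable (μ := MeasureTheory.volume) t₀ t)).symm
      change lam ⬝ᵥ ((∫ τ in t₀..t, Real.exp (-α * (t - τ)) • ((ΦF τ t)ᵀ * (H τ)ᵀ * H τ * ΦF τ t)) *ᵥ lam) = ∫ τ in t₀..t, lam ⬝ᵥ ((Real.exp (-α * (t - τ)) • ((ΦF τ t)ᵀ * (H τ)ᵀ * H τ * ΦF τ t)) *ᵥ lam) at this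
      rw [this]
      refine intervalIntegral.integral_congr fun τ _ => ?_
      have h1 : (ΦF τ t)ᵀ * (H τ)ᵀ * H τ * ΦF τ t
          = (H τ * ΦF τ t)ᵀ * (H τ * ΦF τ t) := by
        rw [Matrix.transpose_mul, Matrix.mul_assoc, Matrix.mul_assoc]
      rw [Matrix.smul_mulVec, dotProduct_smul, h1, smul_eq_mul, hg_def]
      rw [dotProduct_transpose_mul_mulVec]
      congr 1
      simp [dotProduct, sq, Fin.sum_univ_one]
    · rw [Matrix.smul_mulVec, dotProduct_smul, smul_eq_mul,
        dotProduct_transpose_mul_mulVec, ← euclNorm_sq]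
  -- main lower bound on the quadratic form
  have key : ∀ t, t₀ ≤ t → ∀ lam : Fin ν → ℝ,
      Real.exp (-α * δ) * β₁ ^ 2 * β₂ * euclNorm lam ^ 2 ≤ lam ⬝ᵥ (L t *ᵥ lam) := by
    intro t ht lam
    rw [hquad t lam]
    rcases le_or_gt t₀ (t - δ) with h1 | h1
    · -- the integral term dominates
      have htδ : t - δ ≤ t := by linarith
      -- rewrite the integrand on [t-δ, t]
      set lam' := ΦF (t - δ) t *ᵥ lam with hlam'
      have hrw : ∀ τ, g t τ lam
          = Real.exp (-α * (t - τ)) * (((H τ * ΦF τ (t - δ)) *ᵥ lam') 0) ^ 2 := by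
        intro τ
        have hcomp : H τ * ΦF τ t = H τ * ΦF τ (t - δ) * ΦF (t - δ) t := by
          rw [Matrix.mul_assoc, hΦF.comp]
        simp only [hg_def]
        rw [hcomp, ← Matrix.mulVec_mulVec]
      have hsplit : (∫ τ in t₀..t, g t τ lam)
          = (∫ τ in t₀..(t - δ), g t τ lam) + ∫ τ in (t - δ)..t, g t τ lam := by
        rw [intervalIntegral.integral_add_adjacent_intervals
          ((hgcont t lam).intervalIntegrable _ _) ((hgcont t lam).intervalIntegrable _ _)]
      have hI1 : 0 ≤ ∫ τ in t₀..(t - δ), g t τ lam :=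
        intervalIntegral.integral_nonneg h1 fun τ _ => hgnonneg t τ lam
      have hI2 : Real.exp (-α * δ)
            * ∫ τ in (t - δ)..t, (((H τ * ΦF τ (t - δ)) *ᵥ lam') 0) ^ 2
          ≤ ∫ τ in (t - δ)..t, g t τ lam := by
        rw [← intervalIntegral.integral_const_mul]
        apply intervalIntegral.integral_mono_on htδ
        · exact (continuous_const.mul (((continuous_apply 0).comp
            ((hH.matrix_mul (hΦc (t - δ))).matrix_mulVec continuous_const)).pow 2)).intervalIntegrable _ _
        · exact ((hgcont t lam).intervalIntegrable _ _)
        · intro τ hτ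
          rw [hrw τ]
          apply mul_le_mul_of_nonneg_right _ (sq_nonneg _)
          apply Real.exp_le_exp.2
          nlinarith [hτ.1, hτ.2]
      have hobs' := hobs t lam'
      have hlow' := hlow (t - δ) t lam
      have hlam'sq : (β₁ * euclNorm lam) ^ 2 ≤ euclNorm lam' ^ 2 := by
        apply pow_le_pow_left₀ (mul_nonneg hβ₁.le (euclNorm_nonneg _)) hlow'
      have hsnd : 0 ≤ (β₂ * Real.exp (-α * (t - t₀))) * euclNorm (ΦF t₀ t *ᵥ lam) ^ 2 := by
        positivity
      have hchain : Real.exp (-α * δ) * β₁ ^ 2 * β₂ * euclNorm lam ^ 2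
          ≤ ∫ τ in (t - δ)..t, g t τ lam := by
        calc Real.exp (-α * δ) * β₁ ^ 2 * β₂ * euclNorm lam ^ 2
            = Real.exp (-α * δ) * (β₂ * (β₁ * euclNorm lam) ^ 2) := by ring
          _ ≤ Real.exp (-α * δ) * (β₂ * euclNorm lam' ^ 2) := by
              apply mul_le_mul_of_nonneg_left _ (Real.exp_nonneg _)
              exact mul_le_mul_of_nonneg_left hlam'sq hβ₂.le
          _ ≤ Real.exp (-α * δ)
              * ∫ τ in (t - δ)..t, (((H τ * ΦF τ (t - δ)) *ᵥ lam') 0) ^ 2 :=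
              mul_le_mul_of_nonneg_left hobs' (Real.exp_nonneg _)
          _ ≤ _ := hI2
      rw [hsplit]
      linarith
    · -- the second term dominates
      have hI : 0 ≤ ∫ τ in t₀..t, g t τ lam :=
        intervalIntegral.integral_nonneg ht fun τ _ => hgnonneg t τ lam
      have hexp : Real.exp (-α * δ) ≤ Real.exp (-α * (t - t₀)) := by
        apply Real.exp_le_exp.2
        nlinarith
      have hlow' := hlow t₀ t lam
      have hchain : Real.exp (-α * δ) * β₁ ^ 2 * β₂ * euclNorm lam ^ 2
          ≤ (β₂ * Real.exp (-α * (t - t₀))) * euclNorm (ΦF t₀ t *ᵥ lam) ^ 2 := by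
        have h2 : (β₁ * euclNorm lam) ^ 2 ≤ euclNorm (ΦF t₀ t *ᵥ lam) ^ 2 :=
          pow_le_pow_left₀ (mul_nonneg hβ₁.le (euclNorm_nonneg _)) hlow' 2
        calc Real.exp (-α * δ) * β₁ ^ 2 * β₂ * euclNorm lam ^ 2
            = (β₂ * Real.exp (-α * δ)) * (β₁ * euclNorm lam) ^ 2 := by ring
          _ ≤ (β₂ * Real.exp (-α * (t - t₀))) * (β₁ * euclNorm lam) ^ 2 := by
              apply mul_le_mul_of_nonneg_right _ (sq_nonneg _)
              exact mul_le_mul_of_nonneg_left hexp hβ₂.le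
          _ ≤ _ := mul_le_mul_of_nonneg_left h2 (by positivity)
      linarith
  -- the lower bound constant is positive
  have hcpos : 0 < Real.exp (-α * δ) * β₁ ^ 2 * β₂ := by positivity
  -- symmetry of L t
  have hsymm : ∀ t, (L t)ᵀ = L t := by
    intro t
    rw [hL t, Matrix.transpose_add]
    congr 1
    · have := ((transposeCLM (ν := ν)).intervalIntegral_comp_comm
        ((hcont t).intervalIntegrable (μ := MeasureTheory.volume) t₀ t)).symm
      change (∫ τ in t₀..t, Real.exp (-α * (t - τ)) • ((ΦF τ t)ᵀ * (H τ)ᵀ * H τ * ΦF τ t))ᵀ = ∫ τ in t₀..t, (Real.exp (-α * (t - τ)) • ((ΦF τ t)ᵀ * (H τ)ᵀ * H τ * ΦF τ t))ᵀ at this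
      rw [this]
      refine intervalIntegral.integral_congr fun τ _ => ?_
      rw [Matrix.transpose_smul]
      congr 1
      have h1 : (ΦF τ t)ᵀ * (H τ)ᵀ * H τ * ΦF τ t
          = (H τ * ΦF τ t)ᵀ * (H τ * ΦF τ t) := by
        rw [Matrix.transpose_mul, Matrix.mul_assoc, Matrix.mul_assoc]
      rw [h1, Matrix.transpose_mul, Matrix.transpose_transpose]
    · rw [Matrix.transpose_smul, Matrix.transpose_mul, Matrix.transpose_transpose]
  refine ⟨key, ?_, ?_⟩
  · -- positive definiteness
    intro t ht
    refine Matrix.PosDef.of_dotProduct_mulVec_pos ?_ fun x hx => ?_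
    · show (L t)ᴴ = L t
      rw [Matrix.conjTranspose_eq_transpose_of_trivial, hsymm]
    · have h1 := key t ht x
      have h2 : 0 < Real.exp (-α * δ) * β₁ ^ 2 * β₂ * euclNorm x ^ 2 := by
        have := euclNorm_pos hx
        positivity
      calc (0 : ℝ) < Real.exp (-α * δ) * β₁ ^ 2 * β₂ * euclNorm x ^ 2 := h2
        _ ≤ x ⬝ᵥ (L t *ᵥ x) := h1
        _ = star x ⬝ᵥ (L t *ᵥ x) := by simp
  · -- bounded inverse
    set c := Real.exp (-α * δ) * β₁ ^ 2 * β₂ with hc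
    refine ⟨Real.sqrt ν / c, ?_⟩
    intro t ht
    -- L t is invertible
    have hpd : (L t).PosDef := by
      refine Matrix.PosDef.of_dotProduct_mulVec_pos ?_ fun x hx => ?_
      · show (L t)ᴴ = L t
        rw [Matrix.conjTranspose_eq_transpose_of_trivial, hsymm]
      · have h1 := key t ht x
        have h2 : 0 < c * euclNorm x ^ 2 := by
          have := euclNorm_pos hx
          positivity
        calc (0 : ℝ) < c * euclNorm x ^ 2 := h2
          _ ≤ x ⬝ᵥ (L t *ᵥ x) := h1
          _ = star x ⬝ᵥ (L t *ᵥ x) := by simp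
    have hdet : IsUnit (L t).det := hpd.det_pos.ne'.isUnit
    -- lower bound on ‖L t *ᵥ x‖
    have hLx : ∀ x : Fin ν → ℝ, c * euclNorm x ≤ euclNorm (L t *ᵥ x) := by
      intro x
      rcases eq_or_ne x 0 with rfl | hx
      · simp [euclNorm]
      · have h1 := key t ht x
        have h2 : x ⬝ᵥ (L t *ᵥ x) ≤ euclNorm x * euclNorm (L t *ᵥ x) :=
          dotProduct_le_euclNorm_mul_euclNorm x _
        have hxpos := euclNorm_pos hx
        have : c * euclNorm x ^ 2 ≤ euclNorm x * euclNorm (L t *ᵥ x) := le_trans h1 h2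
        nlinarith
    -- bound on columns of the inverse
    have hinv : ∀ y : Fin ν → ℝ, euclNorm ((L t)⁻¹ *ᵥ y) ≤ euclNorm y / c := by
      intro y
      have hy : L t *ᵥ ((L t)⁻¹ *ᵥ y) = y := by
        rw [Matrix.mulVec_mulVec, Matrix.mul_nonsing_inv _ hdet, Matrix.one_mulVec]
      have h := hLx ((L t)⁻¹ *ᵥ y)
      rw [hy] at h
      rw [le_div_iff₀ hcpos]
      linarith
    -- Frobenius norm bound
    have hnorm : ‖(L t)⁻¹‖ ≤ Real.sqrt ν / c := by
      set M := (L t)⁻¹ with hM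
      rw [Matrix.frobenius_norm_def]
      have hsum : (∑ i, ∑ j, ‖M i j‖ ^ (2 : ℝ)) ≤ (ν : ℝ) / c ^ 2 := by
        have hcol : ∀ j : Fin ν, (∑ i, ‖M i j‖ ^ (2 : ℝ)) ≤ 1 / c ^ 2 := by
          intro j
          have h1 : euclNorm (M *ᵥ Pi.single j 1) ≤ euclNorm (Pi.single j 1) / c :=
            hinv _
          have h2 : euclNorm (Pi.single j 1 : Fin ν → ℝ) = 1 := by
            rw [euclNorm]
            rw [Finset.sum_eq_single j]
            · simp
            · intro i _ hij; simp [Pi.single_apply, hij]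
            · intro h; exact absurd (Finset.mem_univ j) h
          rw [h2] at h1
          have h3 : (M *ᵥ Pi.single j 1) = fun i => M i j := by
            simp [Matrix.mulVec_single]
            rfl
          have h4 : ∑ i, ‖M i j‖ ^ (2 : ℝ) = ∑ i, (M i j) ^ 2 := by
            refine Finset.sum_congr rfl fun i _ => ?_
            rw [show (2:ℝ) = ((2:ℕ):ℝ) by norm_num, Real.rpow_natCast,
              Real.norm_eq_abs, sq_abs]
          rw [h4]
          have h5 : euclNorm (M *ᵥ Pi.single j 1) ^ 2 = ∑ i, (M i j) ^ 2 := by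
            rw [euclNorm, Real.sq_sqrt (Finset.sum_nonneg fun i _ => sq_nonneg _), h3]
          rw [← h5]
          calc euclNorm (M *ᵥ Pi.single j 1) ^ 2 ≤ (1 / c) ^ 2 :=
              pow_le_pow_left₀ (euclNorm_nonneg _) h1 2
            _ = 1 / c ^ 2 := by rw [div_pow, one_pow]
        calc (∑ i, ∑ j, ‖M i j‖ ^ (2 : ℝ)) = ∑ j, ∑ i, ‖M i j‖ ^ (2 : ℝ) :=
            Finset.sum_comm
          _ ≤ ∑ _j : Fin ν, 1 / c ^ 2 := Finset.sum_le_sum fun j _ => hcol j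
          _ = (ν : ℝ) / c ^ 2 := by
              rw [Finset.sum_const, Finset.card_univ, Fintype.card_fin, nsmul_eq_mul,
                mul_one_div]
      have hpow : (∑ i, ∑ j, ‖M i j‖ ^ (2 : ℝ)) ^ (1 / 2 : ℝ)
          ≤ ((ν : ℝ) / c ^ 2) ^ (1 / 2 : ℝ) := by
        apply Real.rpow_le_rpow _ hsum (by norm_num)
        exact Finset.sum_nonneg fun i _ => Finset.sum_nonneg fun j _ =>
          Real.rpow_nonneg (norm_nonneg _) _
      refine le_trans hpow (le_of_eq ?_)
      rw [← Real.sqrt_eq_rpow, Real.sqrt_div (by positivity), Real.sqrt_sq hcpos.le]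
    exact hnorm
end
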